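/- For every α ∈ (0,1/10] there is a constant c(α) > 0 depending only on α such that the following holds: for every finite metric space (X,d) with at least two points, every chaining functional h of log-concave type, and every probability measure ρ on X, there exists an α-labelled net L on X with val_h(L) ≤ c(α)·max_{x∈X} ∫₀^∞ h(ρ(B(x,r))) dr (the right-hand side being interpreted as +∞ if some ball of positive radius has ρ-measure zero). -/

import Mathlib

open MeasureTheory

noncomputable section

/-- `f` is log-concave on `[0,∞)`. -/
def IsLogConcaveOn (f : ℝ → ℝ) : Prop :=
  ∀ x ∈ Set.Ici (0:ℝ), ∀ y ∈ Set.Ici (0:ℝ), ∀ t ∈ Set.Icc (0:ℝ) 1,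
    f x ^ t * f y ^ (1 - t) ≤ f (t * x + (1 - t) * y)

/-- `f` is a continuous, non-increasing, log-concave probability density on `[0,∞)`
normalized so that `f 0 = 1`. -/
structure IsChainingDensity (f : ℝ → ℝ) : Prop where
  nonneg : ∀ t : ℝ, 0 ≤ t → 0 ≤ f t
  continuousOn : ContinuousOn f (Set.Ici 0)
  antitoneOn : AntitoneOn f (Set.Ici 0)
  logConcave : IsLogConcaveOn f
  total : (∫ t in Set.Ioi (0:ℝ), f t) = 1
  normalized : f 0 = 1

/-- The complementary cumulative distribution function `F(s) = ∫_s^∞ f(t) dt`. -/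
def ccdf (f : ℝ → ℝ) (s : ℝ) : ℝ := ∫ t in Set.Ioi s, f t

/-- The chaining functional `h(p) = F⁻¹(p)`, defined on `(0,1]` as the least
`s ≥ 0` with `F(s) ≤ p`. -/
def chainFn (f : ℝ → ℝ) (p : ℝ) : ℝ := sInf {s : ℝ | 0 ≤ s ∧ ccdf f s ≤ p}

open scoped ENNReal

/-- The extended (`[0,∞]`-valued) chaining functional: `h(p)` is the least `s ≥ 0`
with `F(s) ≤ p`, and `+∞` when no such `s` exists (in particular
`h(0) = lim_{p→0⁺} h(p) ∈ (0,∞]`). -/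
def chainFnE (f : ℝ → ℝ) (p : ℝ) : ℝ≥0∞ :=
  sInf {t : ℝ≥0∞ | ∃ s : ℝ, 0 ≤ s ∧ ccdf f s ≤ p ∧ t = ENNReal.ofReal s}

/-- A probability measure on a finite set, given by its point masses. -/
def IsProbOn {X : Type*} [Fintype X] (μ : X → ℝ) : Prop :=
  (∀ x, 0 ≤ μ x) ∧ (∑ x, μ x) = 1

/-- The mass `μ(B(x,r))` of the closed ball of radius `r` around `x`. -/
def ballMass {X : Type*} [MetricSpace X] [Fintype X] (μ : X → ℝ) (x : X) (r : ℝ) : ℝ :=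
  ∑ y ∈ Finset.univ.filter (fun y => dist x y ≤ r), μ y

/-- `∫₀^∞ h(μ(B(x,r))) dr`, valued in `[0,∞]`. -/
def Hint {X : Type*} [MetricSpace X] [Fintype X] (f : ℝ → ℝ) (μ : X → ℝ) (x : X) : ℝ≥0∞ :=
  ∫⁻ r in Set.Ioi (0:ℝ), chainFnE f (ballMass μ x r)

/-- The diameter of the finite metric space `X`. -/
def fdiam (X : Type*) [MetricSpace X] : ℝ := Metric.diam (Set.univ : Set X)

/-- A rooted tree whose nodes carry a subset of `X` and a nonnegative integer
label; the children of each node are given in order (so that the `i`-th child `W`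
of a node, counting from `1`, has `σ(W) = i`). -/
inductive LTree (X : Type u) : Type u where
  | node (s : Finset X) (m : ℕ) (children : List (LTree X)) : LTree X

namespace LTree

/-- The subset of `X` at the root node. -/
def set {X : Type u} : LTree X → Finset X
  | node s _ _ => s

/-- The label `m` of the root node. -/
def label {X : Type u} : LTree X → ℕ
  | node _ m _ => m

/-- The value of a labelled net:
`val_h(L) = max_{x∈X} Σ_{(V,W) ∈ P_x} α^{m(V)}·diam(X)·h(1/σ(W))`, where the sum
runs over the parent-child edges of the root-to-leaf path `P_x` and `σ(W)` is the
(1-based) position of `W` among the children of `V`. -/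
def val {X : Type u} [MetricSpace X] [Fintype X] (f : ℝ → ℝ) (α : ℝ) : LTree X → ℝ
  | .node _ m cs =>
      (((cs.attach.map (fun c => val f α c.1)).zipIdx.map Prod.swap).map
        (fun p => α ^ m * fdiam X * chainFn f (1 / ((p.1 + 1 : ℕ) : ℝ)) + p.2)).foldr max 0
  decreasing_by
  simp only [LTree.node.sizeOf_spec]
  have := List.sizeOf_lt_of_mem c.2
  omega

end LTree

/-- `L` is a valid `α`-labelled net on the finite metric space `X`: every leaf is
a singleton, the children of every non-leaf node form a partition of it,
`diam(V) ≤ α^{m(V)}·diam(X)` for every node `V`, and `m(C) ≥ m(V)+1` for every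
child `C` of a node `V` (the ordering `σ` is given by the list order). -/
inductive ValidLNet {X : Type u} [MetricSpace X] [Fintype X] (α : ℝ) : LTree X → Prop where
  | node (s : Finset X) (m : ℕ) (cs : List (LTree X))
      (hleaf : cs = [] → s.card = 1)
      (hsub : ∀ c ∈ cs, LTree.set c ⊆ s)
      (hcover : cs ≠ [] → ∀ x ∈ s, ∃ c ∈ cs, x ∈ LTree.set c)
      (hdisj : ∀ i j : Fin cs.length, i ≠ j →
        Disjoint (LTree.set (cs.get i)) (LTree.set (cs.get j)))
      (hdiam : Metric.diam ((s : Set X)) ≤ α ^ m * fdiam X)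
      (hlabel : ∀ c ∈ cs, m + 1 ≤ LTree.label c)
      (hrec : ∀ c ∈ cs, ValidLNet α c) :
      ValidLNet α (.node s m cs)

/-! Greedy construction. A node `s` with at least two points gets the label `m` with
`α^(m+1) diam X < diam s ≤ α^m diam X` and is cut greedily at radius `a = α^(m+2) diam X / 4`:
repeatedly take the remaining point whose `a`-ball is heaviest and split off its `2a`-ball.
A point of the `i`-th piece (counting from `0`) has an `a`-ball no heavier than those of `i+1`
pairwise `2a`-separated centres; these balls are disjoint, so its own has mass at most `1/(i+1)`.
Hence on the radii between the child's scale `b ≤ α²a` and `a` the integrand `h(ρ(B(x,r)))` is at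
least `h(1/(i+1))`, and the cost `α^m diam X · h(1/(i+1))` of the edge is at most `8/α²` times
that slice of the integral. Summing along a root-to-leaf path telescopes. -/

lemma chainFn_nonneg (f : ℝ → ℝ) (p : ℝ) : 0 ≤ chainFn f p :=
  Real.sInf_nonneg fun _ hs => hs.1

lemma ofReal_chainFn_le_chainFnE (f : ℝ → ℝ) (p : ℝ) :
    ENNReal.ofReal (chainFn f p) ≤ chainFnE f p :=
  le_sInf <| by
    rintro _ ⟨s, hs, hFs, rfl⟩
    exact ENNReal.ofReal_le_ofReal (csInf_le ⟨0, fun _ hu => hu.1⟩ ⟨hs, hFs⟩)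

lemma chainFnE_antitone (f : ℝ → ℝ) : Antitone (chainFnE f) :=
  fun _ _ hpq => sInf_le_sInf fun _ ⟨s, hs, hFs, ht⟩ => ⟨s, hs, hFs.trans hpq, ht⟩

section BallMass

variable {X : Type*} [MetricSpace X] [Fintype X]

lemma ballMass_mono {ρ : X → ℝ} (hρ : ∀ x, 0 ≤ ρ x) (x : X) : Monotone (ballMass ρ x) :=
  fun _ _ hrr' => Finset.sum_le_sum_of_subset_of_nonneg
    (Finset.monotone_filter_right _ fun _ _ hy => hy.trans hrr') fun y _ _ => hρ y

lemma card_mul_le_one_of_separated [DecidableEq X] {ρ : X → ℝ} (hρ : IsProbOn ρ) {a μ : ℝ}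
    {Z : Finset X} (hsep : (Z : Set X).Pairwise fun u v => 2 * a < dist u v)
    (hμ : ∀ z ∈ Z, μ ≤ ballMass ρ z a) : Z.card * μ ≤ 1 := by
  have hdisj : (Z : Set X).PairwiseDisjoint fun z => Finset.univ.filter (dist z · ≤ a) := by
    intro u hu v hv huv
    refine Finset.disjoint_left.2 fun y hyu hyv => (hsep hu hv huv).not_ge ?_
    rw [Finset.mem_filter] at hyu hyv
    linarith [dist_triangle_right u v y]
  calc Z.card * μ = ∑ _z ∈ Z, μ := by simp
  _ ≤ ∑ z ∈ Z, ballMass ρ z a := Finset.sum_le_sum hμ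
  _ = ∑ y ∈ Z.biUnion fun z => Finset.univ.filter (dist z · ≤ a), ρ y :=
    (Finset.sum_biUnion hdisj).symm
  _ ≤ ∑ y, ρ y :=
    Finset.sum_le_sum_of_subset_of_nonneg (Finset.subset_univ _) fun y _ _ => hρ.1 y
  _ = 1 := hρ.2

def truncHint (f : ℝ → ℝ) (ρ : X → ℝ) (x : X) (a : ℝ) : ℝ≥0∞ :=
  ∫⁻ r in Set.Ioc 0 a, chainFnE f (ballMass ρ x r)

lemma truncHint_le_Hint (f : ℝ → ℝ) (ρ : X → ℝ) (x : X) (a : ℝ) :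
    truncHint f ρ x a ≤ Hint f ρ x :=
  lintegral_mono_set Set.Ioc_subset_Ioi_self

lemma ofReal_mul_chainFn_le_lintegral {f : ℝ → ℝ} {ρ : X → ℝ} (hρ : ∀ x, 0 ≤ ρ x) {x : X}
    {a b p : ℝ} (hx : ballMass ρ x a ≤ p) :
    ENNReal.ofReal ((a - b) * chainFn f p) ≤ ∫⁻ r in Set.Ioc b a, chainFnE f (ballMass ρ x r) :=
  calc ENNReal.ofReal ((a - b) * chainFn f p)
      = ENNReal.ofReal (chainFn f p) * volume (Set.Ioc b a) := by
        rw [Real.volume_Ioc, mul_comm, ENNReal.ofReal_mul (chainFn_nonneg f p)]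
    _ = ∫⁻ _ in Set.Ioc b a, ENNReal.ofReal (chainFn f p) := (setLIntegral_const _ _).symm
    _ ≤ ∫⁻ r in Set.Ioc b a, chainFnE f (ballMass ρ x r) :=
        setLIntegral_mono' measurableSet_Ioc fun r hr => (ofReal_chainFn_le_chainFnE f p).trans
          (chainFnE_antitone f ((ballMass_mono hρ x hr.2).trans hx))

lemma ofReal_add_truncHint_le {f : ℝ → ℝ} {ρ : X → ℝ} (hρ : ∀ x, 0 ≤ ρ x) {x : X}
    {a b p c k : ℝ} (hb : 0 ≤ b) (hba : b ≤ a) (hx : ballMass ρ x a ≤ p) (hk : 0 ≤ k)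
    (hc : c ≤ k * ((a - b) * chainFn f p)) :
    ENNReal.ofReal c + ENNReal.ofReal k * truncHint f ρ x b ≤
      ENNReal.ofReal k * truncHint f ρ x a := by
  have hsplit : truncHint f ρ x a =
      truncHint f ρ x b + ∫⁻ r in Set.Ioc b a, chainFnE f (ballMass ρ x r) := by
    rw [truncHint, truncHint, ← Set.Ioc_union_Ioc_eq_Ioc hb hba,
      lintegral_union measurableSet_Ioc (Set.Ioc_disjoint_Ioc_of_le le_rfl)]
  rw [hsplit, mul_add, add_comm]
  gcongr
  calc ENNReal.ofReal c ≤ ENNReal.ofReal (k * ((a - b) * chainFn f p)) :=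
        ENNReal.ofReal_le_ofReal hc
  _ = ENNReal.ofReal k * ENNReal.ofReal ((a - b) * chainFn f p) := ENNReal.ofReal_mul hk
  _ ≤ _ := by gcongr; exact ofReal_mul_chainFn_le_lintegral hρ hx

end BallMass

section Greedy

variable {X : Type*} [MetricSpace X] [Fintype X]

def heaviestCenter (ρ : X → ℝ) (a : ℝ) (t : Finset X) (ht : t.Nonempty) : X :=
  (t.exists_max_image (ballMass ρ · a) ht).choose

variable {ρ : X → ℝ} {a : ℝ} {t : Finset X}

lemma heaviestCenter_mem (ht : t.Nonempty) : heaviestCenter ρ a t ht ∈ t :=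
  (t.exists_max_image (ballMass ρ · a) ht).choose_spec.1

lemma ballMass_le_heaviestCenter (ht : t.Nonempty) {y : X} (hy : y ∈ t) :
    ballMass ρ y a ≤ ballMass ρ (heaviestCenter ρ a t ht) a :=
  (t.exists_max_image (ballMass ρ · a) ht).choose_spec.2 y hy

variable [DecidableEq X]

variable (ρ a) in
/-- The centre is put in explicitly so that the piece is nonempty even for `a < 0`, which lets
`greedyPieces` terminate without assumptions on `a`. -/
def firstPiece (t : Finset X) (ht : t.Nonempty) : Finset X :=
  t.filter fun y => y = heaviestCenter ρ a t ht ∨ dist (heaviestCenter ρ a t ht) y ≤ 2 * a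

lemma firstPiece_subset (ht : t.Nonempty) : firstPiece ρ a t ht ⊆ t :=
  Finset.filter_subset _ _

lemma heaviestCenter_mem_firstPiece (ht : t.Nonempty) :
    heaviestCenter ρ a t ht ∈ firstPiece ρ a t ht :=
  Finset.mem_filter.2 ⟨heaviestCenter_mem ht, Or.inl rfl⟩

lemma sdiff_firstPiece_ssubset (ht : t.Nonempty) : t \ firstPiece ρ a t ht ⊂ t :=
  Finset.sdiff_ssubset (firstPiece_subset ht) ⟨_, heaviestCenter_mem_firstPiece ht⟩

lemma dist_heaviestCenter_le (ha : 0 ≤ a) (ht : t.Nonempty) {y : X}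
    (hy : y ∈ firstPiece ρ a t ht) : dist (heaviestCenter ρ a t ht) y ≤ 2 * a := by
  obtain ⟨-, rfl | hy⟩ := Finset.mem_filter.1 hy
  · rw [dist_self]; positivity
  · exact hy

lemma lt_dist_heaviestCenter (ht : t.Nonempty) {y : X} (hy : y ∈ t \ firstPiece ρ a t ht) :
    2 * a < dist (heaviestCenter ρ a t ht) y := by
  simp only [firstPiece, Finset.mem_sdiff, Finset.mem_filter, not_and, not_or, not_le] at hy
  exact (hy.2 hy.1).2

variable (ρ a) in
def greedyPieces (t : Finset X) : List (Finset X) :=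
  if ht : t.Nonempty then firstPiece ρ a t ht :: greedyPieces (t \ firstPiece ρ a t ht) else []
termination_by t.card
decreasing_by exact Finset.card_lt_card (sdiff_firstPiece_ssubset ht)

variable (ρ a) in
lemma greedyPieces_ne_nil (ht : t.Nonempty) : greedyPieces ρ a t ≠ [] := by
  rw [greedyPieces, dif_pos ht]
  exact List.cons_ne_nil _ _

lemma subset_of_mem_greedyPieces {C : Finset X} (hC : C ∈ greedyPieces ρ a t) : C ⊆ t := by
  fun_induction greedyPieces ρ a t with
  | case1 t ht ih =>
    rcases List.mem_cons.1 hC with rfl | hC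
    · exact firstPiece_subset ht
    · exact (ih hC).trans Finset.sdiff_subset
  | case2 => simp at hC

lemma nonempty_of_mem_greedyPieces {C : Finset X} (hC : C ∈ greedyPieces ρ a t) :
    C.Nonempty := by
  fun_induction greedyPieces ρ a t with
  | case1 t ht ih =>
    rcases List.mem_cons.1 hC with rfl | hC
    · exact ⟨_, heaviestCenter_mem_firstPiece ht⟩
    · exact ih hC
  | case2 => simp at hC

lemma diam_le_of_mem_greedyPieces (ha : 0 ≤ a) {C : Finset X} (hC : C ∈ greedyPieces ρ a t) :
    Metric.diam (C : Set X) ≤ 4 * a := by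
  fun_induction greedyPieces ρ a t with
  | case1 t ht ih =>
    rcases List.mem_cons.1 hC with rfl | hC
    · refine Metric.diam_le_of_forall_dist_le (by positivity) fun u hu v hv => ?_
      linarith [dist_triangle_left u v (heaviestCenter ρ a t ht),
        dist_heaviestCenter_le ha ht hu, dist_heaviestCenter_le ha ht hv]
    · exact ih hC
  | case2 => simp at hC

lemma exists_mem_greedyPieces {x : X} (hx : x ∈ t) : ∃ C ∈ greedyPieces ρ a t, x ∈ C := by
  fun_induction greedyPieces ρ a t with
  | case1 t ht ih =>
    by_cases hxC : x ∈ firstPiece ρ a t ht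
    · exact ⟨_, List.mem_cons_self, hxC⟩
    · obtain ⟨C, hC, hxC⟩ := ih (Finset.mem_sdiff.2 ⟨hx, hxC⟩)
      exact ⟨C, List.mem_cons_of_mem _ hC, hxC⟩
  | case2 t ht => exact absurd ⟨x, hx⟩ ht

variable (ρ a t) in
lemma pairwise_disjoint_greedyPieces : (greedyPieces ρ a t).Pairwise Disjoint := by
  fun_induction greedyPieces ρ a t with
  | case1 t ht ih =>
    refine List.Pairwise.cons (fun C hC => ?_) ih
    exact Finset.disjoint_of_subset_right (subset_of_mem_greedyPieces hC) Finset.disjoint_sdiff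
  | case2 => exact List.Pairwise.nil

lemma exists_separated_of_mem_greedyPieces {i : ℕ} (hi : i < (greedyPieces ρ a t).length)
    {x : X} (hx : x ∈ (greedyPieces ρ a t)[i]) :
    ∃ Z ⊆ t, Z.card = i + 1 ∧ (∀ z ∈ Z, ballMass ρ x a ≤ ballMass ρ z a) ∧
      (Z : Set X).Pairwise fun u v => 2 * a < dist u v := by
  fun_induction greedyPieces ρ a t generalizing i with
  | case1 t ht ih =>
    cases i with
    | zero =>
      have hxt : x ∈ t := firstPiece_subset ht hx
      exact ⟨{heaviestCenter ρ a t ht}, by simp [heaviestCenter_mem ht], rfl,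
        by simpa using ballMass_le_heaviestCenter ht hxt, by simp⟩
    | succ i =>
      obtain ⟨Z, hZt, hZcard, hZmass, hZsep⟩ := ih (Nat.lt_of_succ_lt_succ hi) hx
      have hxt : x ∈ t :=
        (Finset.mem_sdiff.1 (subset_of_mem_greedyPieces (List.getElem_mem _) hx)).1
      have hcZ : heaviestCenter ρ a t ht ∉ Z := fun hc =>
        (Finset.mem_sdiff.1 (hZt hc)).2 (heaviestCenter_mem_firstPiece ht)
      refine ⟨insert (heaviestCenter ρ a t ht) Z, ?_, ?_, ?_, ?_⟩
      · exact Finset.insert_subset (heaviestCenter_mem ht) (hZt.trans Finset.sdiff_subset)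
      · rw [Finset.card_insert_of_notMem hcZ, hZcard]
      · exact Finset.forall_mem_insert _ _ _ |>.2 ⟨ballMass_le_heaviestCenter ht hxt, hZmass⟩
      · rw [Finset.coe_insert]
        refine hZsep.insert fun z hz _ => ?_
        have := lt_dist_heaviestCenter ht (hZt hz)
        exact ⟨this, dist_comm z _ ▸ this⟩
  | case2 => simp at hi

lemma ballMass_le_of_mem_greedyPieces (hρ : IsProbOn ρ) {i : ℕ}
    (hi : i < (greedyPieces ρ a t).length) {x : X} (hx : x ∈ (greedyPieces ρ a t)[i]) :
    ballMass ρ x a ≤ 1 / ((i + 1 : ℕ) : ℝ) := by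
  obtain ⟨Z, -, hZcard, hZmass, hZsep⟩ := exists_separated_of_mem_greedyPieces hi hx
  rw [le_div_iff₀ (by positivity), mul_comm, ← hZcard]
  exact card_mul_le_one_of_separated hρ hZsep hZmass

end Greedy

section GreedyNet

variable {X : Type*} [MetricSpace X] {α : ℝ}

lemma diam_pos_of_one_lt_card {s : Finset X} (hs : 1 < s.card) : 0 < Metric.diam (s : Set X) := by
  obtain ⟨x, hx, y, hy, hxy⟩ := Finset.one_lt_card.1 hs
  exact (dist_pos.2 hxy).trans_le (Metric.dist_le_diam_of_mem s.finite_toSet.isBounded hx hy)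

variable (X) in
def pieceRadius (α : ℝ) (m : ℕ) : ℝ := α ^ (m + 2) * fdiam X / 4

lemma pieceRadius_nonneg (hα₀ : 0 ≤ α) (m : ℕ) : 0 ≤ pieceRadius X α m := by
  have : 0 ≤ fdiam X := Metric.diam_nonneg
  unfold pieceRadius
  positivity

lemma pieceRadius_le_sq_mul (hα₀ : 0 ≤ α) (hα₁ : α ≤ 1) {m n : ℕ} (hmn : m + 2 ≤ n) :
    pieceRadius X α n ≤ α ^ 2 * pieceRadius X α m := by
  have hD : 0 ≤ fdiam X := Metric.diam_nonneg
  have : α ^ (n + 2) ≤ α ^ (m + 2) * α ^ 2 := by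
    rw [← pow_add]; exact pow_le_pow_of_le_one hα₀ hα₁ (by omega)
  unfold pieceRadius
  nlinarith

lemma pow_mul_fdiam_le_sub_pieceRadius (hα₀ : 0 < α) (hα : α ^ 2 ≤ 1 / 2) {m n : ℕ}
    (hmn : m + 2 ≤ n) :
    α ^ m * fdiam X ≤ 8 / α ^ 2 * (pieceRadius X α m - pieceRadius X α n) := by
  have hα₁ : α ≤ 1 := by nlinarith
  have hb := pieceRadius_le_sq_mul (X := X) hα₀.le hα₁ hmn
  have ha : 0 ≤ pieceRadius X α m := pieceRadius_nonneg hα₀.le m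
  rw [div_mul_eq_mul_div, le_div_iff₀ (by positivity)]
  have : α ^ m * fdiam X * α ^ 2 = 4 * pieceRadius X α m := by
    unfold pieceRadius; ring
  nlinarith

variable [Fintype X]

lemma diam_le_fdiam (s : Set X) : Metric.diam s ≤ fdiam X :=
  Metric.diam_mono (Set.subset_univ s) Set.finite_univ.isBounded

/-- The junk value `0` is taken when `diam s = 0`, where the set is unbounded. -/
def diamExponent (α : ℝ) (s : Finset X) : ℕ :=
  sSup {k : ℕ | Metric.diam (s : Set X) ≤ α ^ k * fdiam X}

section DiamExponent

variable {s : Finset X} (hα₀ : 0 < α) (hα₁ : α < 1) (hs : 0 < Metric.diam (s : Set X))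
include hα₀ hα₁ hs

lemma bddAbove_diamExponent :
    BddAbove {k : ℕ | Metric.diam (s : Set X) ≤ α ^ k * fdiam X} := by
  have hD : 0 < fdiam X := hs.trans_le (diam_le_fdiam _)
  obtain ⟨N, hN⟩ := exists_pow_lt_of_lt_one (div_pos hs hD) hα₁
  refine ⟨N, fun k hk => ?_⟩
  have : α ^ N < α ^ k := by
    rw [lt_div_iff₀ hD] at hN
    exact lt_of_mul_lt_mul_right (hN.trans_le hk) hD.le
  exact ((pow_lt_pow_iff_right_of_lt_one₀ hα₀ hα₁).1 this).le

lemma diam_le_pow_diamExponent : Metric.diam (s : Set X) ≤ α ^ diamExponent α s * fdiam X :=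
  Nat.sSup_mem ⟨0, by simp [diam_le_fdiam]⟩ (bddAbove_diamExponent hα₀ hα₁ hs)

lemma le_diamExponent {k : ℕ} (hk : Metric.diam (s : Set X) ≤ α ^ k * fdiam X) :
    k ≤ diamExponent α s :=
  le_csSup (bddAbove_diamExponent hα₀ hα₁ hs) hk

lemma pow_succ_diamExponent_lt :
    α ^ (diamExponent α s + 1) * fdiam X < Metric.diam (s : Set X) := by
  by_contra! h
  have := le_diamExponent hα₀ hα₁ hs h
  omega

end DiamExponent

variable [DecidableEq X]

lemma diam_le_of_mem_greedyPieces_pieceRadius (hα₀ : 0 ≤ α) {ρ : X → ℝ} {s C : Finset X} {m : ℕ}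
    (hC : C ∈ greedyPieces ρ (pieceRadius X α m) s) :
    Metric.diam (C : Set X) ≤ α ^ (m + 2) * fdiam X := by
  have := diam_le_of_mem_greedyPieces (pieceRadius_nonneg hα₀ m) hC
  unfold pieceRadius at this
  linarith

lemma card_lt_of_mem_greedyPieces (hα₀ : 0 < α) (hα₁ : α < 1) (ρ : X → ℝ) {s C : Finset X}
    (hs : 1 < s.card) (hC : C ∈ greedyPieces ρ (pieceRadius X α (diamExponent α s)) s) :
    C.card < s.card := by
  have hdiam := diam_pos_of_one_lt_card hs
  have hCdiam := diam_le_of_mem_greedyPieces_pieceRadius hα₀.le hC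
  refine Finset.card_lt_card (Finset.ssubset_iff_subset_ne.2
    ⟨subset_of_mem_greedyPieces hC, fun hCs => (pow_succ_diamExponent_lt hα₀ hα₁ hdiam).not_ge ?_⟩)
  rw [hCs] at hCdiam
  calc Metric.diam (s : Set X) ≤ α ^ (diamExponent α s + 2) * fdiam X := hCdiam
  _ ≤ α ^ (diamExponent α s + 1) * fdiam X := by
        gcongr ?_ * _
        · exact Metric.diam_nonneg
        · exact pow_le_pow_of_le_one hα₀.le hα₁.le (by omega)

variable (α) in
/-- `n` only bounds the recursion depth; `n ≥ s.card` suffices since pieces strictly shrink. -/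
def greedyNet (ρ : X → ℝ) : ℕ → Finset X → ℕ → LTree X
  | 0, s, m => .node s m []
  | n + 1, s, m =>
    if 1 < s.card then
      .node s (diamExponent α s)
        ((greedyPieces ρ (pieceRadius X α (diamExponent α s)) s).map
          fun C => greedyNet ρ n C (diamExponent α s + 2))
    else .node s m []

lemma greedyNet_set (ρ : X → ℝ) (n : ℕ) (s : Finset X) (m : ℕ) :
    (greedyNet α ρ n s m).set = s := by
  cases n with
  | zero => rfl
  | succ n => unfold greedyNet; split_ifs <;> rfl

lemma le_label_greedyNet (hα₀ : 0 < α) (hα₁ : α < 1) (ρ : X → ℝ) (n : ℕ) {s : Finset X} {m : ℕ}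
    (hs : Metric.diam (s : Set X) ≤ α ^ m * fdiam X) : m ≤ (greedyNet α ρ n s m).label := by
  cases n with
  | zero => rfl
  | succ n =>
    unfold greedyNet
    split_ifs with hcard
    · exact le_diamExponent hα₀ hα₁ (diam_pos_of_one_lt_card hcard) hs
    · rfl

end GreedyNet

section ValidLNet

variable {X : Type*} [MetricSpace X] [Fintype X] {α : ℝ} {s : Finset X} {m : ℕ}

lemma validLNet_leaf (hs : s.card = 1) (hdiam : Metric.diam (s : Set X) ≤ α ^ m * fdiam X) :
    ValidLNet α (.node s m []) :=
  .node s m [] (fun _ => hs) (by simp) (by simp) (fun i => i.elim0) hdiam (by simp) (by simp)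

lemma validLNet_node {cs : List (LTree X)} (hne : cs ≠ []) (hsub : ∀ c ∈ cs, c.set ⊆ s)
    (hcover : ∀ x ∈ s, ∃ c ∈ cs, x ∈ c.set) (hdisj : cs.Pairwise fun c d => Disjoint c.set d.set)
    (hdiam : Metric.diam (s : Set X) ≤ α ^ m * fdiam X) (hlabel : ∀ c ∈ cs, m + 1 ≤ c.label)
    (hrec : ∀ c ∈ cs, ValidLNet α c) : ValidLNet α (.node s m cs) := by
  refine .node s m cs (absurd · hne) hsub (fun _ => hcover) (fun i j hij => ?_) hdiam hlabel hrec
  rcases lt_or_gt_of_ne hij with hij | hij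
  · exact hdisj.rel_get_of_lt hij
  · exact (hdisj.rel_get_of_lt hij).symm

variable [DecidableEq X]

lemma greedyNet_valid (hα₀ : 0 < α) (hα₁ : α < 1) (ρ : X → ℝ) {n : ℕ} (hn : s.card ≤ n)
    (hs : s.Nonempty) (hdiam : Metric.diam (s : Set X) ≤ α ^ m * fdiam X) :
    ValidLNet α (greedyNet α ρ n s m) := by
  induction n generalizing s m with
  | zero => exact absurd hs.card_pos (by omega)
  | succ n ih =>
    unfold greedyNet
    split_ifs with hcard
    · set e := diamExponent α s
      set a := pieceRadius X α e
      have hdiam_piece {C} (hC : C ∈ greedyPieces ρ a s) :=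
        diam_le_of_mem_greedyPieces_pieceRadius hα₀.le hC
      refine validLNet_node ?_ ?_ ?_ ?_ ?_ ?_ ?_
      · simpa using greedyPieces_ne_nil ρ a hs
      · simpa [greedyNet_set] using fun C hC => subset_of_mem_greedyPieces hC
      · simpa [greedyNet_set] using fun x hx => exists_mem_greedyPieces hx
      · simpa [List.pairwise_map, greedyNet_set] using pairwise_disjoint_greedyPieces ρ a s
      · exact diam_le_pow_diamExponent hα₀ hα₁ (diam_pos_of_one_lt_card hcard)
      · simp only [List.mem_map, forall_exists_index, and_imp, forall_apply_eq_imp_iff₂]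
        intro C hC
        have := le_label_greedyNet hα₀ hα₁ ρ n (hdiam_piece hC)
        omega
      · simp only [List.mem_map, forall_exists_index, and_imp, forall_apply_eq_imp_iff₂]
        exact fun C hC => ih (by have := card_lt_of_mem_greedyPieces hα₀ hα₁ ρ hcard hC; omega)
          (nonempty_of_mem_greedyPieces hC) (hdiam_piece hC)
    · exact validLNet_leaf (by have := hs.card_pos; omega) hdiam

end ValidLNet

section Value

lemma ofReal_foldr_max_le {l : List ℝ} {T : ℝ≥0∞} (h : ∀ y ∈ l, ENNReal.ofReal y ≤ T) :
    ENNReal.ofReal (l.foldr max 0) ≤ T := by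
  induction l with
  | nil => simp
  | cons y l ih =>
    rw [List.foldr_cons, ENNReal.ofReal_max]
    exact max_le (h y List.mem_cons_self) (ih fun z hz => h z (List.mem_cons_of_mem _ hz))

lemma LTree.ofReal_val_node_le {X : Type*} [MetricSpace X] [Fintype X] {f : ℝ → ℝ} {α : ℝ}
    {s : Finset X} {m : ℕ} {cs : List (LTree X)} {T : ℝ≥0∞}
    (h : ∀ i (hi : i < cs.length),
      ENNReal.ofReal (α ^ m * fdiam X * chainFn f (1 / ((i + 1 : ℕ) : ℝ)) + cs[i].val f α) ≤ T) :
    ENNReal.ofReal ((LTree.node s m cs).val f α) ≤ T := by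
  rw [LTree.val]
  refine ofReal_foldr_max_le fun y hy => ?_
  obtain ⟨i, hi, rfl⟩ := List.mem_iff_getElem.1 hy
  simp only [List.length_map, List.length_zipIdx, List.length_attach] at hi
  simpa using h i hi

lemma add_le_mul_biSup {Y : Type*} {C s : Finset Y} (hC : C.Nonempty) (hCs : C ⊆ s)
    {c v K : ℝ≥0∞} {F G : Y → ℝ≥0∞} (hv : v ≤ K * ⨆ x ∈ C, F x)
    (h : ∀ x ∈ C, c + K * F x ≤ K * G x) : c + v ≤ K * ⨆ x ∈ s, G x := by
  simp_rw [ENNReal.mul_iSup] at hv ⊢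
  calc c + v ≤ c + ⨆ x ∈ C, K * F x := by gcongr
  _ = ⨆ x ∈ C, c + K * F x := ENNReal.add_biSup' hC _
  _ ≤ ⨆ x ∈ s, K * G x := iSup₂_le fun x hx => (h x hx).trans (le_iSup₂_of_le x (hCs hx) le_rfl)

variable {X : Type*} [MetricSpace X] [Fintype X] [DecidableEq X] {α : ℝ}

lemma greedyNet_val_le (f : ℝ → ℝ) (hα₀ : 0 < α) (hα : α ^ 2 ≤ 1 / 2) {ρ : X → ℝ}
    (hρ : IsProbOn ρ) {n : ℕ} {s : Finset X} {m : ℕ} (hn : s.card ≤ n) (hs : s.Nonempty)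
    (hdiam : Metric.diam (s : Set X) ≤ α ^ m * fdiam X) :
    ENNReal.ofReal ((greedyNet α ρ n s m).val f α) ≤
      ENNReal.ofReal (8 / α ^ 2) *
        ⨆ x ∈ s, truncHint f ρ x (pieceRadius X α (greedyNet α ρ n s m).label) := by
  have hα₁ : α < 1 := by nlinarith
  induction n generalizing s m with
  | zero => exact absurd hs.card_pos (by omega)
  | succ n ih =>
    unfold greedyNet
    split_ifs with hcard
    · set e := diamExponent α s
      set a := pieceRadius X α e
      refine LTree.ofReal_val_node_le fun i hi => ?_
      simp only [List.length_map] at hi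
      simp only [List.getElem_map, LTree.label]
      set C := (greedyPieces ρ a s)[i]
      have hC : C ∈ greedyPieces ρ a s := List.getElem_mem hi
      have hdiamC := diam_le_of_mem_greedyPieces_pieceRadius hα₀.le hC
      have hlabel := le_label_greedyNet hα₀ hα₁ ρ n hdiamC
      set b := pieceRadius X α (greedyNet α ρ n C (e + 2)).label
      have hb : b ≤ α ^ 2 * a := pieceRadius_le_sq_mul hα₀.le hα₁.le hlabel
      have ha : 0 ≤ a := pieceRadius_nonneg hα₀.le e
      have hcost := pow_mul_fdiam_le_sub_pieceRadius (X := X) hα₀ hα hlabel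
      refine ENNReal.ofReal_add_le.trans (add_le_mul_biSup (nonempty_of_mem_greedyPieces hC)
        (subset_of_mem_greedyPieces hC) (ih ?_ (nonempty_of_mem_greedyPieces hC) hdiamC)
        fun x hx => ofReal_add_truncHint_le hρ.1 (pieceRadius_nonneg hα₀.le _) (by nlinarith)
          (ballMass_le_of_mem_greedyPieces hρ hi hx) (by positivity) ?_)
      · have := card_lt_of_mem_greedyPieces hα₀ hα₁ ρ hcard hC
        omega
      · have := chainFn_nonneg f (1 / ((i + 1 : ℕ) : ℝ))
        calc α ^ e * fdiam X * chainFn f (1 / ((i + 1 : ℕ) : ℝ))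
            ≤ 8 / α ^ 2 * (a - b) * chainFn f (1 / ((i + 1 : ℕ) : ℝ)) := by gcongr
        _ = _ := by ring
    · simp [LTree.val]

end Value

/-- for every `α ∈ (0,1/10]` there is a constant `c(α) > 0` such
that for every finite metric space `X` with at least two points, every chaining
functional `h` of log-concave type and every probability measure `ρ` on `X`,
there is an `α`-labelled net `L` on `X` with
`val_h(L) ≤ c(α)·max_{x∈X} ∫₀^∞ h(ρ(B(x,r))) dr`. -/
theorem stmt11 (α : ℝ) (hα : α ∈ Set.Ioc (0:ℝ) (1/10)) :
    ∃ c : ℝ, 0 < c ∧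
      ∀ (X : Type) [MetricSpace X] [Fintype X] [Nontrivial X],
      ∀ (f : ℝ → ℝ), IsChainingDensity f →
      ∀ (ρ : X → ℝ), IsProbOn ρ →
      ∃ L : LTree X, ValidLNet α L ∧ LTree.set L = Finset.univ ∧
        ENNReal.ofReal (LTree.val f α L) ≤ ENNReal.ofReal c * (⨆ x : X, Hint f ρ x) := by
  obtain ⟨hα₀, hα⟩ := hα
  have hα₁ : α < 1 := by linarith
  refine ⟨8 / α ^ 2, by positivity, fun X _ _ _ f _ ρ hρ => ?_⟩
  classical
  have hdiam : Metric.diam ((Finset.univ : Finset X) : Set X) ≤ α ^ 0 * fdiam X := by simp [fdiam]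
  refine ⟨greedyNet α ρ (Fintype.card X) Finset.univ 0,
    greedyNet_valid hα₀ hα₁ ρ le_rfl Finset.univ_nonempty hdiam, greedyNet_set .., ?_⟩
  calc _ ≤ ENNReal.ofReal (8 / α ^ 2) * ⨆ x ∈ Finset.univ,
        truncHint f ρ x (pieceRadius X α (greedyNet α ρ (Fintype.card X) Finset.univ 0).label) :=
      greedyNet_val_le f hα₀ (by nlinarith) hρ le_rfl Finset.univ_nonempty hdiam
  _ ≤ _ := by
      gcongr ENNReal.ofReal _ * ?_
      exact iSup₂_le fun x _ => (truncHint_le_Hint ..).trans (le_iSup (Hint f ρ) x)
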